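/- Lemma 3.3: Let z_1, z_2, …, z_m ∈ ℤ^d_{≥0} be distinct vectors with ‖z_i‖₁ ≥ 2 for each i, and fix c ∈ ℝ^d_{>0}. Define f_i : ℤ^d_{≥0} → ℝ by f_i(x) := g_{x,c}(z_i). Then the functions f_1, …, f_m are linearly independent as functions of x: if α_1, …, α_m ∈ ℝ satisfy Σ_{i=1}^m α_i f_i(x) = 0 for all x ∈ ℤ^d_{≥0}, then α_1 = ⋯ = α_m = 0. -/
import Mathlib


open Finset

/-- Monomial `u^v = ∏ i, u i ^ v i` (with the convention `0^0 = 1`). -/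
noncomputable def monPow {d : ℕ} (u : Fin d → ℝ) (v : Fin d → ℕ) : ℝ :=
  ∏ i, u i ^ v i

/-- The reaction vector `ζ = y' - y`, viewed as a real vector. -/
def zetaVec {d : ℕ} (y y' : Fin d → ℕ) : Fin d → ℝ :=
  fun i => (y' i : ℝ) - (y i : ℝ)

/-- Stochastic mass action intensity `λ_k(x) = κ_k ∏_i x_i!/(x_i - y_{ki})!`,
taken to be `0` when `x` is not componentwise at least `y_k`. -/
noncomputable def intensity {d : ℕ} (κk : ℝ) (yk : Fin d → ℕ) (x : Fin d → ℕ) : ℝ :=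
  κk * ∏ i, ((x i).descFactorial (yk i) : ℝ)

/-- Right-hand side of the deterministic mass-action ODE: `Σ_k κ_k c^{y_k} ζ_k`. -/
noncomputable def massActionRHS {d K : ℕ} (κ : Fin K → ℝ) (y y' : Fin K → Fin d → ℕ)
    (c : Fin d → ℝ) : Fin d → ℝ :=
  ∑ k, (κ k * monPow c (y k)) • zetaVec (y k) (y' k)

/-- `c` is differentiable on `[0,∞)` and solves the mass-action ODE there. -/
def solvesMassAction {d K : ℕ} (κ : Fin K → ℝ) (y y' : Fin K → Fin d → ℕ)
    (c : ℝ → Fin d → ℝ) : Prop :=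
  ∀ t ≥ (0:ℝ), HasDerivWithinAt c (massActionRHS κ y y' (c t)) (Set.Ici 0) t

/-- The dynamical and restricted (DR) complex balance condition: for every complex `z`
with `‖z‖₁ ≥ 2` and every `t ≥ 0`,
`Σ_{k : y_k = z} κ_k c(t)^z = Σ_{k : y'_k = z} κ_k c(t)^{y_k}`. -/
def DRcondition {d K : ℕ} (κ : Fin K → ℝ) (y y' : Fin K → Fin d → ℕ)
    (c : ℝ → Fin d → ℝ) : Prop :=
  ∀ z : Fin d → ℕ, 2 ≤ ∑ i, z i → ∀ t ≥ (0:ℝ),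
    ∑ k ∈ univ.filter (fun k => y k = z), κ k * monPow (c t) z
      = ∑ k ∈ univ.filter (fun k => y' k = z), κ k * monPow (c t) (y k)

/-- `P` solves the chemical master equation on `[0,∞)`:
`∂ₜ P(x,t) = Σ_k λ_k(x-ζ_k) P(x-ζ_k,t) 1{x-ζ_k ≥ 0} - Σ_k λ_k(x) P(x,t)`. -/
def solvesCME {d K : ℕ} (κ : Fin K → ℝ) (y y' : Fin K → Fin d → ℕ)
    (P : (Fin d → ℕ) → ℝ → ℝ) : Prop :=
  ∀ x : Fin d → ℕ, ∀ t ≥ (0:ℝ),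
    HasDerivWithinAt (P x)
      ((∑ k, if ∀ i, y' k i ≤ x i + y k i then
          intensity (κ k) (y k) (fun i => x i + y k i - y' k i)
            * P (fun i => x i + y k i - y' k i) t
        else 0)
       - ∑ k, intensity (κ k) (y k) x * P x t)
      (Set.Ici 0) t

/-- The product-Poisson probability mass function `∏_i e^{-c_i} c_i^{x_i}/x_i!`. -/
noncomputable def productPoisson {d : ℕ} (c : Fin d → ℝ) (x : Fin d → ℕ) : ℝ :=
  ∏ i, Real.exp (-(c i)) * (c i) ^ (x i) / (x i).factorial

/-- The function `g_{x,c}(z) = Σ_j (x_j/c_j - 1) z_j - (x!/(x-z)!) c^{-z} + 1` from Lemma 3.2. -/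
noncomputable def gFun {d : ℕ} (x : Fin d → ℕ) (c : Fin d → ℝ) (z : Fin d → ℕ) : ℝ :=
  (∑ j, ((x j : ℝ) / c j - 1) * (z j : ℝ))
    - (∏ j, ((x j).descFactorial (z j) : ℝ)) * (monPow c z)⁻¹ + 1

/-- Falling-factorial monomials indexed by distinct multi-indices are linearly
independent. -/
lemma descFactorial_prod_li_aux {d : ℕ} (β : (Fin d → ℕ) → ℝ) :
    ∀ S : Finset (Fin d → ℕ),
      (∀ x : Fin d → ℕ, ∑ v ∈ S, β v * ∏ j, ((x j).descFactorial (v j) : ℝ) = 0) →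
      ∀ v ∈ S, β v = 0 := by
  intro S
  induction S using Finset.strongInduction with
  | _ S ih =>
    intro h v hv
    obtain ⟨v₀, hv₀, hmin⟩ := Finset.exists_min_image S (fun v => ∑ j, v j) ⟨v, hv⟩
    have hzero : β v₀ = 0 := by
      have h0 := h v₀
      rw [Finset.sum_eq_single v₀] at h0
      · have hpos : (0:ℝ) < ∏ j, (((v₀ j).descFactorial (v₀ j)) : ℝ) := by
          apply Finset.prod_pos
          intro j _
          rw [Nat.descFactorial_self]
          exact_mod_cast (v₀ j).factorial_pos
        rcases mul_eq_zero.mp h0 with h' | h'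
        · exact h'
        · exact absurd h' (ne_of_gt hpos)
      · intro w hw hne
        by_cases hle : ∀ j, w j ≤ v₀ j
        · exfalso
          apply hne
          have hsum : ∑ j, w j ≤ ∑ j, v₀ j := Finset.sum_le_sum (fun j _ => hle j)
          have heq : ∑ j, w j = ∑ j, v₀ j := le_antisymm hsum (hmin w hw)
          have := (Finset.sum_eq_sum_iff_of_le (fun j _ => hle j)).mp heq
          funext j
          exact this j (Finset.mem_univ j)
        · push_neg at hle
          obtain ⟨j, hj⟩ := hle
          have hz : (((v₀ j).descFactorial (w j)) : ℝ) = 0 := by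
            norm_cast
            exact Nat.descFactorial_eq_zero_iff_lt.mpr hj
          rw [Finset.prod_eq_zero (Finset.mem_univ j) hz, mul_zero]
      · intro h'
        exact absurd hv₀ h'
    rcases eq_or_ne v v₀ with rfl | hne
    · exact hzero
    · refine ih (S.erase v₀) (Finset.erase_ssubset hv₀) ?_ v
        (Finset.mem_erase.mpr ⟨hne, hv⟩)
      intro x
      have hx := h x
      rw [← Finset.add_sum_erase S _ hv₀, hzero, zero_mul, zero_add] at hx
      exact hx


/-- Lemma 3.3: for distinct complexes `z_1, …, z_m` with `‖z_i‖₁ ≥ 2` and fixed `c > 0`,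
the functions `x ↦ g_{x,c}(z_i)` are linearly independent. -/
theorem gFun_linearIndependent
    {d m : ℕ} (z : Fin m → Fin d → ℕ) (hzinj : Function.Injective z)
    (hz2 : ∀ i, 2 ≤ ∑ j, z i j)
    (c : Fin d → ℝ) (hc : ∀ i, 0 < c i)
    (α : Fin m → ℝ)
    (hα : ∀ x : Fin d → ℕ, ∑ i, α i * gFun x c (z i) = 0) :
    ∀ i, α i = 0 := by
  classical
  intro i₀
  set stuff : Fin m → (Fin d → ℕ) → ℝ := fun i v =>
    (if v = z i then -(monPow c (z i))⁻¹ else 0)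
      + (∑ j, if v = Pi.single j 1 then (z i j : ℝ) / c j else 0)
      + (if v = 0 then 1 - ∑ j, (z i j : ℝ) else 0) with hstuff
  set β : (Fin d → ℕ) → ℝ := fun v => ∑ i, α i * stuff i v with hβ
  set S : Finset (Fin d → ℕ) :=
    (Finset.univ.image z) ∪ (Finset.univ.image fun j => Pi.single j 1) ∪ {0} with hS
  have hzS : ∀ i, z i ∈ S := fun i => by
    simp only [hS, Finset.mem_union, Finset.mem_image, Finset.mem_singleton]
    left; left; exact ⟨i, Finset.mem_univ i, rfl⟩
  have hsingS : ∀ j, (Pi.single j 1 : Fin d → ℕ) ∈ S := fun j => by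
    simp only [hS, Finset.mem_union, Finset.mem_image, Finset.mem_singleton]
    left; right; exact ⟨j, Finset.mem_univ j, rfl⟩
  have h0S : (0 : Fin d → ℕ) ∈ S := by
    simp [hS]
  have Fsing : ∀ (x : Fin d → ℕ) (j : Fin d),
      (∏ j', ((x j').descFactorial ((Pi.single j 1 : Fin d → ℕ) j') : ℝ)) = x j := by
    intro x j
    rw [Finset.prod_eq_single j]
    · simp
    · intro j' _ hne
      simp [Pi.single_eq_of_ne hne]
    · simp
  -- expansion of gFun as a combination of falling factorials
  have expand : ∀ (x : Fin d → ℕ) (i : Fin m),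
      ∑ v ∈ S, stuff i v * ∏ j, ((x j).descFactorial (v j) : ℝ) = gFun x c (z i) := by
    intro x i
    have e1 : ∑ v ∈ S, (if v = z i then -(monPow c (z i))⁻¹ else 0)
          * ∏ j, ((x j).descFactorial (v j) : ℝ)
        = -(monPow c (z i))⁻¹ * ∏ j, ((x j).descFactorial (z i j) : ℝ) := by
      simp only [ite_mul, zero_mul]
      rw [Finset.sum_ite_eq' S (z i), if_pos (hzS i)]
    have e2 : ∑ v ∈ S, (∑ j, if v = Pi.single j 1 then (z i j : ℝ) / c j else 0)
          * ∏ j', ((x j').descFactorial (v j') : ℝ)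
        = ∑ j, (z i j : ℝ) / c j * (x j : ℝ) := by
      rw [Finset.sum_congr rfl (fun v _ => Finset.sum_mul _ _ _), Finset.sum_comm]
      refine Finset.sum_congr rfl (fun j _ => ?_)
      simp only [ite_mul, zero_mul]
      rw [Finset.sum_ite_eq' S (Pi.single j 1), if_pos (hsingS j), Fsing]
    have e3 : ∑ v ∈ S, (if v = 0 then 1 - ∑ j, (z i j : ℝ) else 0)
          * ∏ j, ((x j).descFactorial (v j) : ℝ)
        = 1 - ∑ j, (z i j : ℝ) := by
      simp only [ite_mul, zero_mul]
      rw [Finset.sum_ite_eq' S (0 : Fin d → ℕ), if_pos h0S]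
      simp
    have split : ∑ v ∈ S, stuff i v * ∏ j, ((x j).descFactorial (v j) : ℝ)
        = (∑ v ∈ S, (if v = z i then -(monPow c (z i))⁻¹ else 0)
            * ∏ j, ((x j).descFactorial (v j) : ℝ))
          + (∑ v ∈ S, (∑ j, if v = Pi.single j 1 then (z i j : ℝ) / c j else 0)
            * ∏ j', ((x j').descFactorial (v j') : ℝ))
          + (∑ v ∈ S, (if v = 0 then 1 - ∑ j, (z i j : ℝ) else 0)
            * ∏ j, ((x j).descFactorial (v j) : ℝ)) := by
      rw [← Finset.sum_add_distrib, ← Finset.sum_add_distrib]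
      refine Finset.sum_congr rfl (fun v _ => ?_)
      rw [hstuff]
      ring
    rw [split, e1, e2, e3, gFun]
    have harith : ∑ j, ((x j : ℝ) / c j - 1) * (z i j : ℝ)
        = (∑ j, (z i j : ℝ) / c j * (x j : ℝ)) - ∑ j, (z i j : ℝ) := by
      rw [← Finset.sum_sub_distrib]
      refine Finset.sum_congr rfl (fun j _ => ?_)
      ring
    rw [harith]
    ring
  -- the key vanishing identity
  have hkey : ∀ x : Fin d → ℕ,
      ∑ v ∈ S, β v * ∏ j, ((x j).descFactorial (v j) : ℝ) = 0 := by
    intro x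
    calc ∑ v ∈ S, β v * ∏ j, ((x j).descFactorial (v j) : ℝ)
        = ∑ v ∈ S, ∑ i, α i * (stuff i v * ∏ j, ((x j).descFactorial (v j) : ℝ)) := by
          refine Finset.sum_congr rfl (fun v _ => ?_)
          rw [hβ, Finset.sum_mul]
          exact Finset.sum_congr rfl (fun i _ => by ring)
      _ = ∑ i, α i * ∑ v ∈ S, stuff i v * ∏ j, ((x j).descFactorial (v j) : ℝ) := by
          rw [Finset.sum_comm]
          exact Finset.sum_congr rfl (fun i _ => (Finset.mul_sum _ _ _).symm)
      _ = ∑ i, α i * gFun x c (z i) :=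
          Finset.sum_congr rfl (fun i _ => by rw [expand x i])
      _ = 0 := hα x
  have hβ0 := descFactorial_prod_li_aux β S hkey (z i₀) (hzS i₀)
  -- compute β (z i₀)
  have hnorm : ∀ i, (2 : ℕ) ≤ ∑ j, z i j := hz2
  have hnsing : ∀ j, z i₀ ≠ Pi.single j 1 := by
    intro j hcon
    have : ∑ j', z i₀ j' = ∑ j', (Pi.single j 1 : Fin d → ℕ) j' := by rw [hcon]
    rw [Finset.sum_pi_single'] at this
    simp only [Finset.mem_univ, if_true] at this
    have := hz2 i₀
    omega
  have hn0 : z i₀ ≠ 0 := by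
    intro hcon
    have : ∑ j, z i₀ j = 0 := by rw [hcon]; simp
    have := hz2 i₀
    omega
  have hβval : β (z i₀) = α i₀ * -(monPow c (z i₀))⁻¹ := by
    have hbeta : β (z i₀) = ∑ i, α i * stuff i (z i₀) := rfl
    rw [hbeta]
    have : ∀ i : Fin m, α i * stuff i (z i₀)
        = if i = i₀ then α i * -(monPow c (z i))⁻¹ else 0 := by
      intro i
      rw [hstuff]
      simp only
      rw [Finset.sum_congr rfl (fun j _ => if_neg (hnsing j)), Finset.sum_const_zero,
        if_neg hn0, add_zero, add_zero]
      by_cases hii : i = i₀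
      · subst hii
        rw [if_pos rfl, if_pos rfl]
      · rw [if_neg (fun hcon => hii (hzinj hcon.symm)), if_neg hii, mul_zero]
    rw [Finset.sum_congr rfl (fun i _ => this i), Finset.sum_ite_eq' Finset.univ i₀,
      if_pos (Finset.mem_univ i₀)]
  have hmon : (0:ℝ) < monPow c (z i₀) := by
    rw [monPow]
    exact Finset.prod_pos (fun j _ => pow_pos (hc j) _)
  rw [hβval] at hβ0
  rcases mul_eq_zero.mp hβ0 with h' | h'
  · exact h'
  · exfalso
    rw [neg_eq_zero, inv_eq_zero] at h'
    exact absurd h' (ne_of_gt hmon)
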